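/- arXiv:2103.16159 — 4 statements merged into one kernel-verified Lean document; each statement's English description precedes it below -/
import Mathlib

section
/- Let $S_0$ be a finite index set of size $N \geq 1$, and let $W_i$, $i \in S_0$, be real random variables. Suppose there exists $g \geq 0$ such that for every subset $A \subseteq S_0$, $\mathbb{P}\big(\bigcap_{i\in A}\{W_i > 0\} \cap \bigcap_{i\in S_0\setminus A}\{W_i < 0\}\big) \leq (1/2 + g)^{N}$. Then $\mathbb{E}\left[\dfrac{\sum_{i\in S_0}\mathbf{1}\{W_i > 0\}}{1 + \sum_{i\in S_0}\mathbf{1}\{W_i < 0\}}\right] \leq (1 + g)^{2N}$, provided $\mathbb{P}(W_i = 0) = 0$ for all $i$. -/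
/-!
Almost surely no `W i` vanishes, so the sign pattern of `W` is a.s. a single set `A ⊆ S₀` (the
indices where `W i > 0`), on which the integrand equals `|A| / (1 + |S₀ \ A|)`. The expectation is
therefore at most `(1/2 + g)^N ∑_A |A| / (1 + |S₀ \ A|)`. Grouping the sets by size and using
`k·C(N,k) = (N-k+1)·C(N,k-1)`, the sum equals `∑_{k<N} C(N,k) = 2^N - 1`, and
`2^N (1/2 + g)^N = (1 + 2g)^N ≤ (1 + g)^{2N}`.
-/

open MeasureTheory Finset

theorem Nat.choose_succ_mul_div_eq {N k : ℕ} (hk : k < N) :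
    (N.choose (k + 1) : ℝ) * ((k + 1 : ℕ) / (1 + (N - (k + 1) : ℕ))) = N.choose k := by
  have hden : (1 + (N - (k + 1) : ℕ) : ℝ) = (N - k : ℕ) := by
    rw [← Nat.cast_one, ← Nat.cast_add]; congr 1; omega
  have hpos : (0 : ℝ) < (N - k : ℕ) := by exact_mod_cast Nat.sub_pos_of_lt hk
  rw [hden, ← mul_div_assoc, div_eq_iff hpos.ne', ← Nat.cast_mul, ← Nat.cast_mul,
    Nat.choose_succ_right_eq]

theorem Nat.sum_range_choose_mul_div (N : ℕ) :
    ∑ j ∈ range (N + 1), (N.choose j : ℝ) * (j / (1 + (N - j : ℕ))) = 2 ^ N - 1 := by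
  have hchoose : ∑ j ∈ range N, (N.choose j : ℝ) = 2 ^ N - 1 := by
    have := Nat.sum_range_choose N
    rw [sum_range_succ, Nat.choose_self] at this
    rw [eq_sub_iff_add_eq]; exact_mod_cast this
  rw [sum_range_succ', ← hchoose]
  simp only [Nat.cast_zero, zero_div, mul_zero, add_zero]
  exact sum_congr rfl fun k hk => Nat.choose_succ_mul_div_eq (mem_range.1 hk)

theorem Finset.sum_card_div_one_add_card_compl {ι : Type*} [Fintype ι] [DecidableEq ι] :
    ∑ A : Finset ι, (#A : ℝ) / (1 + #Aᶜ) = 2 ^ Fintype.card ι - 1 := by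
  rw [← powerset_univ, sum_powerset, card_univ, ← Nat.sum_range_choose_mul_div]
  refine sum_congr rfl fun j _ => ?_
  rw [sum_congr rfl fun A hA => by rw [card_compl, (mem_powersetCard.1 hA).2],
    sum_const, card_powersetCard, card_univ, nsmul_eq_mul]

namespace SignPattern

variable {Ω ι : Type*} [Fintype ι]

noncomputable def positiveSet (W : ι → Ω → ℝ) (ω : Ω) : Finset ι := univ.filter fun i => 0 < W i ω

def event (W : ι → Ω → ℝ) (A : Finset ι) : Set Ω :=
  {ω | (∀ i ∈ A, 0 < W i ω) ∧ ∀ i ∉ A, W i ω < 0}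

theorem measurableSet_event [MeasurableSpace Ω] {W : ι → Ω → ℝ} (hW : ∀ i, Measurable (W i))
    (A : Finset ι) : MeasurableSet (event W A) := by
  have hinter : event W A = (⋂ i ∈ A, {ω | 0 < W i ω}) ∩ ⋂ i ∈ (Aᶜ : Set ι), {ω | W i ω < 0} := by
    ext ω; simp [event]
  rw [hinter]
  exact (A.measurableSet_biInter fun i _ => measurableSet_lt measurable_const (hW i)).inter
    (.biInter (Set.to_countable _) fun i _ => measurableSet_lt (hW i) measurable_const)

theorem mem_event_iff {W : ι → Ω → ℝ} {ω : Ω} (hω : ∀ i, W i ω ≠ 0) {A : Finset ι} :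
    ω ∈ event W A ↔ positiveSet W ω = A := by
  simp only [event, Set.mem_ofPred_eq, Finset.ext_iff, positiveSet, mem_filter, mem_univ, true_and]
  refine ⟨fun h i => ⟨fun hi => by_contra fun hiA => (h.2 i hiA).not_gt hi, fun hi => h.1 i hi⟩,
    fun h => ⟨fun i hi => (h i).2 hi, fun i hi => ?_⟩⟩
  exact (hω i).lt_of_le (not_lt.1 fun hpos => hi ((h i).1 hpos))

theorem integral_comp_positiveSet [MeasurableSpace Ω] (μ : Measure Ω) [IsFiniteMeasure μ]
    {W : ι → Ω → ℝ} (hW : ∀ i, Measurable (W i)) (hne : ∀ᵐ ω ∂μ, ∀ i, W i ω ≠ 0)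
    (F : Finset ι → ℝ) :
    ∫ ω, F (positiveSet W ω) ∂μ = ∑ A, μ.real (event W A) * F A := by
  classical
  have hsum : ∀ᵐ ω ∂μ, F (positiveSet W ω) = ∑ A, (event W A).indicator (fun _ => F A) ω := by
    filter_upwards [hne] with ω hω
    simp only [Set.indicator, mem_event_iff hω]
    rw [sum_ite_eq, if_pos (mem_univ _)]
  rw [integral_congr_ae hsum, integral_finsetSum _ fun A _ =>
    (integrable_const (F A)).indicator (measurableSet_event hW A)]
  exact sum_congr rfl fun A _ => by
    rw [integral_indicator_const _ (measurableSet_event hW A), smul_eq_mul]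

theorem sum_boole_div_one_add_sum_boole_eq [DecidableEq ι] {W : ι → Ω → ℝ} {ω : Ω}
    (hω : ∀ i, W i ω ≠ 0) :
    (∑ i, if 0 < W i ω then (1 : ℝ) else 0) / (1 + ∑ i, if W i ω < 0 then (1 : ℝ) else 0) =
      #(positiveSet W ω) / (1 + #(positiveSet W ω)ᶜ) := by
  have hneg : (positiveSet W ω)ᶜ = univ.filter fun i => W i ω < 0 := by
    ext i
    simp [positiveSet, (hω i).le_iff_lt]
  rw [hneg, positiveSet, sum_boole, sum_boole]

end SignPattern

theorem half_add_pow_mul_two_pow_le (N : ℕ) {g : ℝ} (hg : 0 ≤ 1 / 2 + g) :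
    (1 / 2 + g) ^ N * 2 ^ N ≤ (1 + g) ^ (2 * N) := by
  rw [← mul_pow, pow_mul]
  exact pow_le_pow_left₀ (by linarith) (by nlinarith [sq_nonneg g]) N

theorem stmt_3_general {Ω : Type*} {m0 : MeasurableSpace Ω} (μ : Measure Ω)
    [IsProbabilityMeasure μ] {ι : Type*} [Fintype ι] (N : ℕ)
    (hcard : Fintype.card ι = N) (W : ι → Ω → ℝ) (hWmeas : ∀ i, Measurable (W i))
    (g : ℝ) (hg : 0 ≤ g)
    (hsym : ∀ A : Finset ι,
      μ {ω | (∀ i ∈ A, 0 < W i ω) ∧ (∀ i ∉ A, W i ω < 0)} ≤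
        ENNReal.ofReal ((1 / 2 + g) ^ N))
    (hzero : ∀ i, μ {ω | W i ω = 0} = 0) :
    ∫ ω, (∑ i, if 0 < W i ω then (1 : ℝ) else 0) /
        (1 + ∑ i, if W i ω < 0 then (1 : ℝ) else 0) ∂μ ≤ (1 + g) ^ (2 * N) := by
  classical
  have hne : ∀ᵐ ω ∂μ, ∀ i, W i ω ≠ 0 :=
    ae_all_iff.2 fun i => measure_eq_zero_iff_ae_notMem.1 (hzero i)
  have hevent (A : Finset ι) : μ.real (SignPattern.event W A) ≤ (1 / 2 + g) ^ N :=
    ENNReal.toReal_le_of_le_ofReal (by positivity) (hsym A)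
  calc _ = ∫ ω, (#(SignPattern.positiveSet W ω) : ℝ) /
            (1 + #(SignPattern.positiveSet W ω)ᶜ) ∂μ :=
        integral_congr_ae (hne.mono fun ω hω => SignPattern.sum_boole_div_one_add_sum_boole_eq hω)
    _ = ∑ A, μ.real (SignPattern.event W A) * (#A / (1 + #Aᶜ)) :=
        SignPattern.integral_comp_positiveSet μ hWmeas hne fun A => (#A : ℝ) / (1 + #Aᶜ)
    _ ≤ ∑ A : Finset ι, (1 / 2 + g) ^ N * (#A / (1 + #Aᶜ)) :=
        sum_le_sum fun A _ => mul_le_mul_of_nonneg_right (hevent A) (by positivity)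
    _ = (1 / 2 + g) ^ N * (2 ^ N - 1) := by rw [← mul_sum, sum_card_div_one_add_card_compl, hcard]
    _ ≤ (1 / 2 + g) ^ N * 2 ^ N := by gcongr; linarith
    _ ≤ (1 + g) ^ (2 * N) := half_add_pow_mul_two_pow_le N (by linarith)

theorem stmt_3 {Ω : Type*} {m0 : MeasurableSpace Ω} (μ : Measure Ω)
    [IsProbabilityMeasure μ] {ι : Type*} [Fintype ι] (N : ℕ) (hN : 1 ≤ N)
    (hcard : Fintype.card ι = N) (W : ι → Ω → ℝ) (hWmeas : ∀ i, Measurable (W i))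
    (g : ℝ) (hg : 0 ≤ g)
    (hsym : ∀ A : Finset ι,
      μ {ω | (∀ i ∈ A, 0 < W i ω) ∧ (∀ i ∉ A, W i ω < 0)} ≤
        ENNReal.ofReal ((1 / 2 + g) ^ N))
    (hzero : ∀ i, μ {ω | W i ω = 0} = 0) :
    ∫ ω, (∑ i, if 0 < W i ω then (1 : ℝ) else 0) /
        (1 + ∑ i, if W i ω < 0 then (1 : ℝ) else 0) ∂μ ≤ (1 + g) ^ (2 * N) :=
  stmt_3_general (m0 := m0) μ N hcard W hWmeas g hg hsym hzero
end

section
/- Let $W_1,\ldots,W_m$ be real random variables, $S_0 \subseteq \{1,\ldots,m\}$, and let $T > 0$ and $q \in (0,1)$ be constants such that almost surely $\sum_{i=1}^m \mathbf{1}\{W_i \leq -T\} \leq q \sum_{i=1}^m \mathbf{1}\{W_i \geq T\}$. Then $\mathbb{E}\left[\dfrac{\sum_{i\in S_0}\mathbf{1}\{W_i \geq T\}}{\sum_{i=1}^m \mathbf{1}\{W_i \geq T\} + q^{-1}}\right] \leq q\, \mathbb{E}\left[\dfrac{\sum_{i\in S_0}\mathbf{1}\{W_i \geq T\}}{1 +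 \sum_{i\in S_0}\mathbf{1}\{W_i \leq -T\}}\right]$. -/
/-!
Pointwise, the hypothesis bounds the number of indices with `W i ≤ -T`, and a fortiori the number
`C` of such indices in `S0`, by `q B`, where `B` counts the indices with `W i ≥ T`; hence
`q (B + q⁻¹) = q B + 1 ≥ 1 + C`, which is the pointwise form of the inequality. Both integrands are
bounded by `#S0`, so integrating the pointwise bound is legitimate.
-/

open MeasureTheory Finset

lemma div_add_inv_le_mul_div_one_add {a b c q : ℝ} (hq : 0 < q) (ha : 0 ≤ a) (hc : 0 ≤ c)
    (hcb : c ≤ q * b) : a / (b + q⁻¹) ≤ q * (a / (1 + c)) :=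
  calc a / (b + q⁻¹) = q * a / (1 + q * b) := by field_simp; ring
    _ ≤ q * a / (1 + c) := by gcongr
    _ = q * (a / (1 + c)) := mul_div_assoc ..

lemma measurable_sum_ite_one {Ω ι : Type*} [MeasurableSpace Ω] (s : Finset ι)
    {p : ι → Ω → Prop} [∀ i ω, Decidable (p i ω)] (hp : ∀ i, MeasurableSet {ω | p i ω}) :
    Measurable fun ω => ∑ i ∈ s, if p i ω then (1 : ℝ) else 0 :=
  Finset.measurable_sum s fun i _ => Measurable.ite (hp i) measurable_const measurable_const

lemma integrable_div_one_add {Ω : Type*} [MeasurableSpace Ω] {μ : Measure Ω} [IsFiniteMeasure μ]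
    {f g : Ω → ℝ} {C : ℝ} (hf : Measurable f) (hg : Measurable g) (hf0 : ∀ ω, 0 ≤ f ω)
    (hfC : ∀ ω, f ω ≤ C) (hg0 : ∀ ω, 0 ≤ g ω) :
    Integrable (fun ω => f ω / (1 + g ω)) μ :=
  Integrable.of_bound (hf.div (measurable_const.add hg)).aestronglyMeasurable C <|
    ae_of_all _ fun ω => by
      have hg1 : 1 ≤ 1 + g ω := le_add_of_nonneg_right (hg0 ω)
      rw [Real.norm_of_nonneg (div_nonneg (hf0 ω) (by linarith))]
      exact (div_le_self (hf0 ω) hg1).trans (hfC ω)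

theorem stmt_6_general {Ω : Type*} {m0 : MeasurableSpace Ω} (μ : Measure Ω)
    [IsProbabilityMeasure μ] (m : ℕ) (W : Fin m → Ω → ℝ)
    (hWmeas : ∀ i, Measurable (W i)) (S0 : Finset (Fin m))
    (T q : ℝ) (hq0 : 0 < q)
    (hthresh : ∀ᵐ ω ∂μ,
      (∑ i, if W i ω ≤ -T then (1 : ℝ) else 0) ≤ q * ∑ i, if T ≤ W i ω then (1 : ℝ) else 0) :
    ∫ ω, (∑ i ∈ S0, if T ≤ W i ω then (1 : ℝ) else 0) /
        ((∑ i, if T ≤ W i ω then (1 : ℝ) else 0) + q⁻¹) ∂μ ≤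
      q * ∫ ω, (∑ i ∈ S0, if T ≤ W i ω then (1 : ℝ) else 0) /
        (1 + ∑ i ∈ S0, if W i ω ≤ -T then (1 : ℝ) else 0) ∂μ := by
  set A := fun ω => ∑ i ∈ S0, if T ≤ W i ω then (1 : ℝ) else 0
  set C := fun ω => ∑ i ∈ S0, if W i ω ≤ -T then (1 : ℝ) else 0
  have hA0 (ω : Ω) : 0 ≤ A ω := by positivity
  have hC0 (ω : Ω) : 0 ≤ C ω := by positivity
  have hA_le_card (ω : Ω) : A ω ≤ #S0 := by
    simp only [A, sum_boole]
    exact_mod_cast card_filter_le _ _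
  have hpointwise : ∀ᵐ ω ∂μ, A ω / ((∑ i, if T ≤ W i ω then (1 : ℝ) else 0) + q⁻¹) ≤
      q * (A ω / (1 + C ω)) := by
    filter_upwards [hthresh] with ω hω
    exact div_add_inv_le_mul_div_one_add hq0 (hA0 ω) (hC0 ω)
      ((sum_le_univ_sum_of_nonneg fun _ => by positivity).trans hω)
  have hintegrable : Integrable (fun ω => A ω / (1 + C ω)) μ :=
    integrable_div_one_add
      (measurable_sum_ite_one _ fun i => measurableSet_le measurable_const (hWmeas i))
      (measurable_sum_ite_one _ fun i => measurableSet_le (hWmeas i) measurable_const)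
      hA0 hA_le_card hC0
  calc _ ≤ ∫ ω, q * (A ω / (1 + C ω)) ∂μ :=
        integral_mono_of_nonneg (ae_of_all _ fun ω => by positivity) (hintegrable.const_mul q)
          hpointwise
    _ = _ := integral_const_mul q _

theorem stmt_6 {Ω : Type*} {m0 : MeasurableSpace Ω} (μ : Measure Ω)
    [IsProbabilityMeasure μ] (m : ℕ) (W : Fin m → Ω → ℝ)
    (hWmeas : ∀ i, Measurable (W i)) (S0 : Finset (Fin m))
    (T q : ℝ) (hT : 0 < T) (hq0 : 0 < q) (hq1 : q < 1)
    (hthresh : ∀ᵐ ω ∂μ,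
      (∑ i, if W i ω ≤ -T then (1 : ℝ) else 0) ≤ q * ∑ i, if T ≤ W i ω then (1 : ℝ) else 0) :
    ∫ ω, (∑ i ∈ S0, if T ≤ W i ω then (1 : ℝ) else 0) /
        ((∑ i, if T ≤ W i ω then (1 : ℝ) else 0) + q⁻¹) ∂μ ≤
      q * ∫ ω, (∑ i ∈ S0, if T ≤ W i ω then (1 : ℝ) else 0) /
        (1 + ∑ i ∈ S0, if W i ω ≤ -T then (1 : ℝ) else 0) ∂μ :=
  stmt_6_general (m0 := m0) μ m W hWmeas S0 T q hq0 hthresh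
end

section
/- Let $W_1,\ldots,W_m$ be real random variables, $S_0 \subseteq \{1,\ldots,m\}$, and let $T > 0$ and $q\in(0,1)$ satisfy almost surely $1 + \sum_{i=1}^m \mathbf{1}\{W_i \leq -T\} \leq q\,\max\big(1, \sum_{i=1}^m \mathbf{1}\{W_i \geq T\}\big)$. Then $\mathbb{E}\left[\dfrac{\sum_{i\in S_0}\mathbf{1}\{W_i \geq T\}}{\max(1,\sum_{i=1}^m \mathbf{1}\{W_i \geq T\})}\right] \leq q\,\mathbb{E}\left[\dfrac{\sum_{i\in S_0}\mathbf{1}\{W_i \geq T\}}{1 + \sum_{i\in S_0}\mathbf{1}\{W_i \leq -T\}}\right]$. -/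
/-!
On the event where the threshold condition holds, the denominators compare as
`1 + #{i ∈ S₀ | Wᵢ ≤ -T} ≤ 1 + #{i | Wᵢ ≤ -T} ≤ q · max 1 #{i | Wᵢ ≥ T}`,
so the false-discovery proportion is bounded pointwise by `q` times the ratio on the right;
both ratios lie in `[0, |S₀|]`, hence are integrable, and integrating gives the claim.
-/

open MeasureTheory Finset

lemma div_le_mul_div_of_le_mul {n d₁ d₂ q : ℝ} (hn : 0 ≤ n) (hd₁ : 0 < d₁) (hd₂ : 0 < d₂)
    (h : d₂ ≤ q * d₁) : n / d₁ ≤ q * (n / d₂) := by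
  rw [mul_div_assoc', div_le_div_iff₀ hd₁ hd₂]
  nlinarith [mul_le_mul_of_nonneg_left h hn]

section Count

variable {ι : Type*} (p : ι → Prop) [DecidablePred p]

lemma sum_boole_nonneg (s : Finset ι) : 0 ≤ ∑ i ∈ s, if p i then (1 : ℝ) else 0 := by
  rw [sum_boole]
  positivity

lemma sum_boole_le_card (s : Finset ι) : ∑ i ∈ s, (if p i then (1 : ℝ) else 0) ≤ #s := by
  rw [sum_boole]
  exact_mod_cast card_filter_le s p

end Count

section Integrability

variable {Ω : Type*} {m0 : MeasurableSpace Ω} {μ : Measure Ω}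

lemma measurable_sum_boole {ι : Type*} (s : Finset ι) {p : ι → Ω → Prop}
    [∀ i ω, Decidable (p i ω)] (hp : ∀ i, MeasurableSet {ω | p i ω}) :
    Measurable fun ω => ∑ i ∈ s, if p i ω then (1 : ℝ) else 0 :=
  Finset.measurable_sum _ fun i _ => Measurable.ite (hp i) measurable_const measurable_const

lemma integrable_div_of_one_le [IsFiniteMeasure μ] {f g : Ω → ℝ} (hf : Measurable f)
    (hg : Measurable g) {C : ℝ} (hfC : ∀ ω, ‖f ω‖ ≤ C) (hg1 : ∀ ω, 1 ≤ g ω) :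
    Integrable (fun ω => f ω / g ω) μ := by
  refine Integrable.of_bound (hf.div hg).aestronglyMeasurable C (ae_of_all _ fun ω => ?_)
  rw [norm_div, Real.norm_of_nonneg (zero_le_one.trans (hg1 ω))]
  exact (div_le_self (norm_nonneg _) (hg1 ω)).trans (hfC ω)

end Integrability

theorem stmt_7_general {Ω : Type*} {m0 : MeasurableSpace Ω} (μ : Measure Ω)
    [IsProbabilityMeasure μ] (m : ℕ) (W : Fin m → Ω → ℝ)
    (hWmeas : ∀ i, Measurable (W i)) (S0 : Finset (Fin m))
    (T q : ℝ)
    (hthresh : ∀ᵐ ω ∂μ,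
      1 + (∑ i, if W i ω ≤ -T then (1 : ℝ) else 0) ≤
        q * max 1 (∑ i, if T ≤ W i ω then (1 : ℝ) else 0)) :
    ∫ ω, (∑ i ∈ S0, if T ≤ W i ω then (1 : ℝ) else 0) /
        max 1 (∑ i, if T ≤ W i ω then (1 : ℝ) else 0) ∂μ ≤
      q * ∫ ω, (∑ i ∈ S0, if T ≤ W i ω then (1 : ℝ) else 0) /
        (1 + ∑ i ∈ S0, if W i ω ≤ -T then (1 : ℝ) else 0) ∂μ := by
  have hpos_meas (s : Finset (Fin m)) :
      Measurable fun ω => ∑ i ∈ s, if T ≤ W i ω then (1 : ℝ) else 0 :=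
    measurable_sum_boole s fun i => measurableSet_le measurable_const (hWmeas i)
  have hneg_meas (s : Finset (Fin m)) :
      Measurable fun ω => ∑ i ∈ s, if W i ω ≤ -T then (1 : ℝ) else 0 :=
    measurable_sum_boole s fun i => measurableSet_le (hWmeas i) measurable_const
  have hbound (ω : Ω) :
      ‖∑ i ∈ S0, if T ≤ W i ω then (1 : ℝ) else 0‖ ≤ #S0 := by
    rw [Real.norm_of_nonneg (sum_boole_nonneg _ _)]
    exact sum_boole_le_card _ _
  rw [← integral_const_mul]
  refine integral_mono_ae
    (integrable_div_of_one_le (hpos_meas S0) (measurable_const.max (hpos_meas univ)) hbound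
      fun _ => le_max_left _ _)
    ((integrable_div_of_one_le (hpos_meas S0) (measurable_const.add (hneg_meas S0)) hbound
      fun _ => le_add_of_nonneg_right (sum_boole_nonneg _ _)).const_mul q) ?_
  filter_upwards [hthresh] with ω h
  refine div_le_mul_div_of_le_mul (sum_boole_nonneg _ _)
    (zero_lt_one.trans_le (le_max_left _ _))
    (add_pos_of_pos_of_nonneg zero_lt_one (sum_boole_nonneg _ _)) (le_trans ?_ h)
  gcongr
  exact subset_univ S0

theorem stmt_7 {Ω : Type*} {m0 : MeasurableSpace Ω} (μ : Measure Ω)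
    [IsProbabilityMeasure μ] (m : ℕ) (W : Fin m → Ω → ℝ)
    (hWmeas : ∀ i, Measurable (W i)) (S0 : Finset (Fin m))
    (T q : ℝ) (hT : 0 < T) (hq0 : 0 < q) (hq1 : q < 1)
    (hthresh : ∀ᵐ ω ∂μ,
      1 + (∑ i, if W i ω ≤ -T then (1 : ℝ) else 0) ≤
        q * max 1 (∑ i, if T ≤ W i ω then (1 : ℝ) else 0)) :
    ∫ ω, (∑ i ∈ S0, if T ≤ W i ω then (1 : ℝ) else 0) /
        max 1 (∑ i, if T ≤ W i ω then (1 : ℝ) else 0) ∂μ ≤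
      q * ∫ ω, (∑ i ∈ S0, if T ≤ W i ω then (1 : ℝ) else 0) /
        (1 + ∑ i ∈ S0, if W i ω ≤ -T then (1 : ℝ) else 0) ∂μ :=
  stmt_7_general (m0 := m0) μ m W hWmeas S0 T q hthresh
end

section
/- Let $F : \mathbb{R}^p \times \mathbb{R}^m \to \mathbb{R}$ be convex and differentiable, $\lambda > 0$, and suppose $(\hat\beta, \hat\gamma)$ minimizes $F(\beta,\gamma) + \lambda\|\gamma\|_1$ with subgradient certificate $\hat\rho \in \partial\|\hat\gamma\|_1$ satisfying $\nabla_\beta F(\hat\beta,\hat\gamma) = 0$, $\nabla_\gamma F(\hat\beta,\hat\gamma) = -\lambda\hat\rho$, and $|\hat\rho_j| < 1$ strictly for all $j$ in a set $S_0$. If $(\tilde\beta,\tilde\gamma)$ is any other minimizer of the same objective, then $\tilde\gamma_j = 0$ for all $j \in S_0$. -/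
/-!
Along the segment from `(β̂, γ̂)` to `(β̃, γ̃)`, convexity of `F` gives
`F(β̃, γ̃) - F(β̂, γ̂) ≥ ∇F(β̂, γ̂)·(β̃ - β̂, γ̃ - γ̂) = -λ ⟨ρ̂, γ̃ - γ̂⟩`. Since both points have the
same penalized objective value and `⟨ρ̂, γ̂⟩ = ‖γ̂‖₁`, this yields `‖γ̃‖₁ ≤ ⟨ρ̂, γ̃⟩`. But
`ρ̂ i γ̃ i ≤ |γ̃ i|` termwise, strictly wherever `|ρ̂ i| < 1` and `γ̃ i ≠ 0`.
-/

open Set Finset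

theorem ConvexOn.apply_sub_le_sub_of_hasFDerivAt {E : Type*} [NormedAddCommGroup E]
    [NormedSpace ℝ E] {s : Set E} {f : E → ℝ} {L : E →L[ℝ] ℝ} {x y : E}
    (hf : ConvexOn ℝ s f) (hx : x ∈ s) (hy : y ∈ s) (hL : HasFDerivAt f L x) :
    L (y - x) ≤ f y - f x := by
  have hline : ConvexOn ℝ (Icc (0 : ℝ) 1) (f ∘ AffineMap.lineMap x y) :=
    (hf.comp_affineMap _).subset (hf.1.mapsTo_lineMap hx hy) (convex_Icc 0 1)
  have hderiv : HasDerivAt (f ∘ AffineMap.lineMap (k := ℝ) x y) (L (y - x)) 0 :=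
    (by simpa using hL : HasFDerivAt f L (AffineMap.lineMap x y (0 : ℝ))).comp_hasDerivAt 0
      AffineMap.hasDerivAt_lineMap
  simpa [slope_def_field] using
    hline.le_slope_of_hasDerivAt (by simp) (by simp) zero_lt_one hderiv

theorem mul_le_abs_of_abs_le_one {ρ γ : ℝ} (hρ : |ρ| ≤ 1) : ρ * γ ≤ |γ| :=
  calc ρ * γ ≤ |ρ| * |γ| := abs_mul ρ γ ▸ le_abs_self _
    _ ≤ |γ| := mul_le_of_le_one_left (abs_nonneg γ) hρ

theorem mul_lt_abs_of_abs_lt_one {ρ γ : ℝ} (hρ : |ρ| < 1) (hγ : γ ≠ 0) : ρ * γ < |γ| :=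
  calc ρ * γ ≤ |ρ| * |γ| := abs_mul ρ γ ▸ le_abs_self _
    _ < |γ| := mul_lt_of_lt_one_left (abs_pos.2 hγ) hρ

theorem eq_zero_of_sum_abs_le_sum_mul {ι : Type*} [Fintype ι] {ρ γ : ι → ℝ}
    (hρ : ∀ i, |ρ i| ≤ 1) (hsum : ∑ i, |γ i| ≤ ∑ i, ρ i * γ i) {j : ι} (hj : |ρ j| < 1) :
    γ j = 0 := by
  by_contra hγ
  have : ∑ i, ρ i * γ i < ∑ i, |γ i| :=
    sum_lt_sum (fun i _ ↦ mul_le_abs_of_abs_le_one (hρ i))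
      ⟨j, mem_univ j, mul_lt_abs_of_abs_lt_one hj hγ⟩
  exact this.not_ge hsum

theorem stmt_14_general (p m : ℕ) (F : (Fin p → ℝ) → (Fin m → ℝ) → ℝ)
    (hconv : ConvexOn ℝ Set.univ (fun q : (Fin p → ℝ) × (Fin m → ℝ) => F q.1 q.2))
    (lam : ℝ) (hlam : 0 < lam)
    (βh : Fin p → ℝ) (γh : Fin m → ℝ) (ρh : Fin m → ℝ)
    (L : ((Fin p → ℝ) × (Fin m → ℝ)) →L[ℝ] ℝ)
    (hderiv : HasFDerivAt (fun q : (Fin p → ℝ) × (Fin m → ℝ) => F q.1 q.2) L (βh, γh))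
    (hL : ∀ q : (Fin p → ℝ) × (Fin m → ℝ), L q = -lam * ∑ i, ρh i * q.2 i)
    (hρ_bdd : ∀ i, |ρh i| ≤ 1) (hρ_dual : ∑ i, ρh i * γh i = ∑ i, |γh i|)
    (S0 : Finset (Fin m)) (hρ_strict : ∀ j ∈ S0, |ρh j| < 1)
    (βt : Fin p → ℝ) (γt : Fin m → ℝ)
    (hmin' : F βt γt + lam * ∑ i, |γt i| = F βh γh + lam * ∑ i, |γh i|) :
    ∀ j ∈ S0, γt j = 0 := by
  have hgrad := hconv.apply_sub_le_sub_of_hasFDerivAt (mem_univ _) (mem_univ (βt, γt)) hderiv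
  have hsplit : ∑ i, ρh i * (γt - γh) i = ∑ i, ρh i * γt i - ∑ i, |γh i| := by
    simp only [Pi.sub_apply, mul_sub, sum_sub_distrib, hρ_dual]
  rw [hL, Prod.snd_sub, hsplit] at hgrad
  have hdual : ∑ i, |γt i| ≤ ∑ i, ρh i * γt i := by
    refine le_of_mul_le_mul_left ?_ hlam
    linarith
  exact fun j hj ↦ eq_zero_of_sum_abs_le_sum_mul hρ_bdd hdual (hρ_strict j hj)

theorem stmt_14 (p m : ℕ) (F : (Fin p → ℝ) → (Fin m → ℝ) → ℝ)
    (hconv : ConvexOn ℝ Set.univ (fun q : (Fin p → ℝ) × (Fin m → ℝ) => F q.1 q.2))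
    (lam : ℝ) (hlam : 0 < lam)
    (βh : Fin p → ℝ) (γh : Fin m → ℝ) (ρh : Fin m → ℝ)
    (L : ((Fin p → ℝ) × (Fin m → ℝ)) →L[ℝ] ℝ)
    (hderiv : HasFDerivAt (fun q : (Fin p → ℝ) × (Fin m → ℝ) => F q.1 q.2) L (βh, γh))
    (hL : ∀ q : (Fin p → ℝ) × (Fin m → ℝ), L q = -lam * ∑ i, ρh i * q.2 i)
    (hρ_bdd : ∀ i, |ρh i| ≤ 1) (hρ_dual : ∑ i, ρh i * γh i = ∑ i, |γh i|)
    (S0 : Finset (Fin m)) (hρ_strict : ∀ j ∈ S0, |ρh j| < 1)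
    (hmin : ∀ (β : Fin p → ℝ) (γ : Fin m → ℝ),
      F βh γh + lam * ∑ i, |γh i| ≤ F β γ + lam * ∑ i, |γ i|)
    (βt : Fin p → ℝ) (γt : Fin m → ℝ)
    (hmin' : F βt γt + lam * ∑ i, |γt i| = F βh γh + lam * ∑ i, |γh i|) :
    ∀ j ∈ S0, γt j = 0 :=
  stmt_14_general p m F hconv lam hlam βh γh ρh L hderiv hL hρ_bdd hρ_dual S0 hρ_strict βt γt hmin'
end
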